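/- Let ψ: T → S be a proper morphism between restriction semigroups. The following are equivalent: (1) for every s ∈ S and e ∈ P(T), if e ≤ t^* for some t ∈ T with ψ(t) ≤ s, then e ≤ r^* for some r ∈ T with ψ(r) = s (i.e., ψ̃ = ψ̂ as families of partial maps); (2) for all s, t ∈ S with s ≤ t and every u ∈ T with ψ(u) = s, there exists v ∈ T with ψ(v) = t and u ≤ v; (3) for every s ∈ S: {u ∈ T : ψ(u) ≤ s} = {u ∈ T : u ≤ v for some v with ψ(v) = s}, i.e., ψ⁻¹(s↓) = (ψ⁻¹(s))↓. -/

import Mathlib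

/-!
Condition (3) is the set-level form of (2), and (3) gives (1) because `x ↦ x^*` is monotone.
For (1) ⇒ (2), apply (1) to `e = u^*` to get `r` with `u^* ≤ r^*` and `ψ r = t`. Then `w = r u^*`
has `w^* = u^*` and `ψ w = t (ψ u)^* = ψ u`, so `u ∼ w` by properness; compatible elements with the
same domain projection are equal, hence `u = r u^* ≤ r`.
-/

/-- A (two-sided) restriction semigroup: a semigroup with unary operations
`rstar` (`x ↦ x^*`) and `rplus` (`x ↦ x^+`) satisfying the standard identities. -/
class RestrictionSemigroup (S : Type*) extends Semigroup S where
  rstar : S → S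
  rplus : S → S
  rplus_mul_self : ∀ x : S, rplus x * x = x
  rplus_comm : ∀ x y : S, rplus x * rplus y = rplus y * rplus x
  rplus_rplus_mul : ∀ x y : S, rplus (rplus x * y) = rplus x * rplus y
  mul_rplus : ∀ x y : S, rplus (x * y) * x = x * rplus y
  mul_rstar_self : ∀ x : S, x * rstar x = x
  rstar_comm : ∀ x y : S, rstar x * rstar y = rstar y * rstar x
  rstar_mul_rstar : ∀ x y : S, rstar (x * rstar y) = rstar x * rstar y
  rstar_mul : ∀ x y : S, y * rstar (x * y) = rstar x * y
  rstar_rplus : ∀ x : S, rstar (rplus x) = rplus x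
  rplus_rstar : ∀ x : S, rplus (rstar x) = rstar x

open RestrictionSemigroup

/-- `e` is a projection: `e ∈ P(S) = {s^* : s ∈ S}`. -/
def IsProj {S : Type*} [RestrictionSemigroup S] (e : S) : Prop :=
  ∃ s : S, rstar s = e

/-- The natural partial order: `s ≤ t` iff `s = t f` for some projection `f`. -/
def rle {S : Type*} [RestrictionSemigroup S] (s t : S) : Prop :=
  ∃ f : S, IsProj f ∧ s = t * f

/-- Compatibility: `s ∼ t` iff `s t^* = t s^*` and `t^+ s = s^+ t`. -/
def compat {S : Type*} [RestrictionSemigroup S] (s t : S) : Prop :=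
  s * rstar t = t * rstar s ∧ rplus t * s = rplus s * t

section Order

variable {S : Type*} [RestrictionSemigroup S]

theorem rstar_rstar (x : S) : rstar (rstar x) = rstar x := by
  rw [← rplus_rstar x, rstar_rplus, rplus_rstar]

theorem IsProj.mul {e f : S} (he : IsProj e) (hf : IsProj f) : IsProj (e * f) := by
  obtain ⟨a, rfl⟩ := he
  obtain ⟨b, rfl⟩ := hf
  exact ⟨a * rstar b, rstar_mul_rstar a b⟩

theorem rle_iff_eq_mul_rstar {s t : S} : rle s t ↔ s = t * rstar s := by
  constructor
  · rintro ⟨f, ⟨b, rfl⟩, rfl⟩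
    rw [rstar_mul_rstar, ← mul_assoc, mul_rstar_self]
  · intro h
    exact ⟨rstar s, ⟨s, rfl⟩, h⟩

theorem rle_refl (s : S) : rle s s :=
  rle_iff_eq_mul_rstar.2 (mul_rstar_self s).symm

theorem rle.trans {s t w : S} (hst : rle s t) (htw : rle t w) : rle s w := by
  obtain ⟨f, hf, rfl⟩ := hst
  obtain ⟨g, hg, rfl⟩ := htw
  exact ⟨g * f, hg.mul hf, mul_assoc ..⟩

theorem rle.rstar_rle_rstar {s t : S} (h : rle s t) : rle (rstar s) (rstar t) := by
  obtain ⟨f, ⟨b, rfl⟩, rfl⟩ := h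
  exact ⟨rstar b, ⟨b, rfl⟩, rstar_mul_rstar t b⟩

theorem eq_of_compat_of_rstar_eq {u w : S} (h : compat u w) (hs : rstar u = rstar w) : u = w :=
  calc u = u * rstar u := (mul_rstar_self u).symm
    _ = u * rstar w := by rw [hs]
    _ = w * rstar u := h.1
    _ = w * rstar w := by rw [hs]
    _ = w := mul_rstar_self w

end Order

section Morphism

variable {T S : Type*} [RestrictionSemigroup T] [RestrictionSemigroup S] {ψ : T → S}

theorem rle.map (hmul : ∀ a b : T, ψ (a * b) = ψ a * ψ b)
    (hstar : ∀ a : T, ψ (rstar a) = rstar (ψ a)) {u v : T} (h : rle u v) : rle (ψ u) (ψ v) := by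
  obtain ⟨f, ⟨b, rfl⟩, rfl⟩ := h
  exact ⟨ψ (rstar b), ⟨ψ b, (hstar b).symm⟩, hmul v (rstar b)⟩

theorem rle_of_rstar_rle_of_map_rle (hmul : ∀ a b : T, ψ (a * b) = ψ a * ψ b)
    (hstar : ∀ a : T, ψ (rstar a) = rstar (ψ a)) (hproper : ∀ a b : T, ψ a = ψ b → compat a b)
    {u r : T} (hdom : rle (rstar u) (rstar r)) (hle : rle (ψ u) (ψ r)) : rle u r := by
  rw [rle_iff_eq_mul_rstar] at hdom hle ⊢
  rw [rstar_rstar] at hdom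
  have hw_rstar : rstar u = rstar (r * rstar u) := by rw [rstar_mul_rstar, ← hdom]
  have hw_map : ψ u = ψ (r * rstar u) := by rw [hmul, hstar, ← hle]
  exact eq_of_compat_of_rstar_eq (hproper _ _ hw_map) hw_rstar

end Morphism

theorem stmt18_general {T S : Type*} [RestrictionSemigroup T] [RestrictionSemigroup S]
    (ψ : T → S)
    (hmul : ∀ a b : T, ψ (a * b) = ψ a * ψ b)
    (hstar : ∀ a : T, ψ (rstar a) = rstar (ψ a))
    (hproper : ∀ a b : T, ψ a = ψ b → compat a b) :
    List.TFAE
      [∀ (s : S) (e : T), IsProj e →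
          (∃ t : T, rle e (rstar t) ∧ rle (ψ t) s) →
          ∃ r : T, rle e (rstar r) ∧ ψ r = s,
       ∀ s t : S, rle s t → ∀ u : T, ψ u = s → ∃ v : T, ψ v = t ∧ rle u v,
       ∀ s : S, {u : T | rle (ψ u) s} = {u : T | ∃ v : T, ψ v = s ∧ rle u v}] := by
  tfae_have 1 → 2 := by
    rintro h1 s t hst u rfl
    obtain ⟨r, hdom, rfl⟩ := h1 t (rstar u) ⟨u, rfl⟩ ⟨u, rle_refl _, hst⟩
    exact ⟨r, rfl, rle_of_rstar_rle_of_map_rle hmul hstar hproper hdom hst⟩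
  tfae_have 2 → 3 := by
    intro h2 s
    ext u
    constructor
    · intro hu
      exact h2 (ψ u) s hu u rfl
    · rintro ⟨v, rfl, huv⟩
      exact huv.map hmul hstar
  tfae_have 3 → 1 := by
    rintro h3 s e - ⟨t, het, hts⟩
    obtain ⟨v, rfl, htv⟩ : t ∈ {u : T | ∃ v : T, ψ v = s ∧ rle u v} := h3 s ▸ hts
    exact ⟨v, het.trans htv.rstar_rle_rstar, rfl⟩
  tfae_finish

theorem stmt18 {T S : Type*} [RestrictionSemigroup T] [RestrictionSemigroup S]
    (ψ : T → S) (hsurj : Function.Surjective ψ)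
    (hmul : ∀ a b : T, ψ (a * b) = ψ a * ψ b)
    (hstar : ∀ a : T, ψ (rstar a) = rstar (ψ a))
    (hplus : ∀ a : T, ψ (rplus a) = rplus (ψ a))
    (hproper : ∀ a b : T, ψ a = ψ b → compat a b) :
    List.TFAE
      [∀ (s : S) (e : T), IsProj e →
          (∃ t : T, rle e (rstar t) ∧ rle (ψ t) s) →
          ∃ r : T, rle e (rstar r) ∧ ψ r = s,
       ∀ s t : S, rle s t → ∀ u : T, ψ u = s → ∃ v : T, ψ v = t ∧ rle u v,
       ∀ s : S, {u : T | rle (ψ u) s} = {u : T | ∃ v : T, ψ v = s ∧ rle u v}] :=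
  stmt18_general ψ hmul hstar hproper
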